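/- arXiv:2311.18080 — 3 statements merged into one kernel-verified Lean document; each statement's English description precedes it below -/
import Mathlib

section
/- Let σ ∈ Sₙ be a product of j pairwise disjoint cycles of lengths k₁,…,k_j with kᵢ ≥ 2. Then σ⁻¹ can be written as a product of pairwise distinct transpositions in S_{n+2}, each of which moves at least one of the two extra elements x = n+1, y = n+2. -/
/-!
Write `σ⁻¹` as the product of the reversed cycles. For a cycle `c = (d r₁ … rₘ a)` and two
points `x ≠ y` outside it, the star product `(x a)(x rₘ)⋯(x r₁)` is the cycle
`(x r₁ … rₘ a) = (r₁ … rₘ a)(a x)`, and `(a x)(y d)(x d)(y a) = (a d)(x y)`; hence `c (x y)` is a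
product of distinct transpositions, each exchanging `x` or `y` with a point of `c`. The cycles
commute with `(x y)` and have disjoint supports, so concatenating these words writes
`σ⁻¹ (x y)ʲ` as a product of distinct transpositions; if `j` is odd, append `(x y)` itself.
-/

open Equiv
open List hiding swap

theorem exists_nodup_prod_eq_of_prod_eq_mul_pow {M : Type*} [Monoid M] {s g : M}
    (hs : s * s = 1) {ts : List M} (hts : (s :: ts).Nodup) {k : ℕ} (h : ts.prod = g * s ^ k) :
    ∃ ts' : List M, ts'.prod = g ∧ ts'.Nodup ∧ ts' ⊆ s :: ts := by
  obtain ⟨hsts, hts⟩ := nodup_cons.1 hts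
  rw [pow_eq_pow_mod k (by rwa [sq] : s ^ 2 = 1)] at h
  rcases Nat.mod_two_eq_zero_or_one k with hk | hk <;> rw [hk] at h
  · exact ⟨ts, by rwa [pow_zero, mul_one] at h, hts, subset_cons_self s ts⟩
  · refine ⟨ts ++ [s], by rw [prod_append, prod_singleton, h, pow_one, mul_assoc, hs, mul_one],
      by simpa [nodup_append, hts] using fun a ha (h : a = s) => hsts (h ▸ ha), ?_⟩
    simp [subset_def, or_comm]

section

variable {α : Type*} [DecidableEq α]

theorem swap_eq_swap_iff_of_ne {u v u' v' : α} (huv : u ≠ v) (hu'v : u' ≠ v) :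
    swap u v = swap u' v' ↔ u = u' ∧ v = v' := by
  refine ⟨fun h => ?_, fun ⟨hu, hv⟩ => hu ▸ hv ▸ rfl⟩
  have hv : u = swap u' v' v := by rw [← h, swap_apply_right]
  by_cases hvv' : v = v'
  · subst hvv'
    exact ⟨hv.trans (swap_apply_right u' v), rfl⟩
  · exact absurd (hv.trans (swap_apply_of_ne_of_ne hu'v.symm hvv')) huv

theorem nodup_swap_cons_map_uncurry_swap {x y : α} {P : List (α × α)}
    (hP : P.Nodup) (hPxy : ∀ p ∈ P, (p.1 = x ∨ p.1 = y) ∧ p.2 ≠ x ∧ p.2 ≠ y) :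
    (swap x y :: P.map (Function.uncurry swap)).Nodup := by
  have hne : ∀ p ∈ P, ∀ u, (u = x ∨ u = y) → u ≠ p.2 := by
    rintro p hp u (rfl | rfl) <;> grind
  refine nodup_cons.2 ⟨fun h => ?_, hP.map_on fun p hp q hq h => ?_⟩
  · obtain ⟨p, hp, hpxy⟩ := mem_map.1 h
    have := (swap_eq_swap_iff_of_ne (hne p hp p.1 (hPxy p hp).1) (hne p hp x (.inl rfl))).1 hpxy
    exact (hPxy p hp).2.2 this.2
  · obtain ⟨h1, h2⟩ :=
      (swap_eq_swap_iff_of_ne (hne p hp p.1 (hPxy p hp).1) (hne p hp q.1 (hPxy q hq).1)).1 h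
    exact Prod.ext h1 h2

theorem commute_swap_of_apply_eq {f : Perm α} {x y : α} (hx : f x = x) (hy : f y = y) :
    Commute (swap x y) f := by
  simpa [Commute, SemiconjBy, hx, hy] using (mul_swap_eq_swap_mul f x y).symm

theorem formPerm_cons_eq_formPerm_append_singleton {z : α} {s : List α} (h : (z :: s).Nodup) :
    formPerm (z :: s) = formPerm (s ++ [z]) := by
  rw [← formPerm_rotate_one _ h, rotate_cons_succ, rotate_zero]

theorem formPerm_cons_append_singleton {z a : α} {r : List α} (h : (z :: (r ++ [a])).Nodup) :
    formPerm (z :: (r ++ [a])) = formPerm (r ++ [a]) * swap a z := by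
  rw [formPerm_cons_eq_formPerm_append_singleton h, append_assoc, singleton_append,
    formPerm_append_pair]

theorem prod_map_swap_eq_formPerm {x : α} {m : List α} (h : (x :: m).Nodup) :
    (m.map (swap x)).prod = formPerm (x :: m.reverse) := by
  induction m with
  | nil => simp
  | cons b m ih =>
    have hb : (b :: x :: m.reverse).Nodup := by
      simp only [nodup_cons, mem_cons, mem_reverse, nodup_reverse] at h ⊢
      tauto
    rw [map_cons, prod_cons, ih (h.sublist (by simp)), reverse_cons, ← cons_append,
      ← formPerm_cons_eq_formPerm_append_singleton hb, formPerm_cons_cons, Equiv.swap_comm]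

theorem swap_mul_swap_mul_swap_mul_swap {a d x y : α} (had : a ≠ d) (hxy : x ≠ y)
    (hxa : x ≠ a) (hxd : x ≠ d) (hya : y ≠ a) (hyd : y ≠ d) :
    swap a x * swap y d * swap x d * swap y a = swap a d * swap x y := by
  ext z
  simp only [Perm.mul_apply, swap_apply_def]
  grind

theorem exists_pairs_formPerm_mul_swap {x y : α} {l : List α} (hl : l.Nodup)
    (hlen : 2 ≤ l.length) (hx : x ∉ l) (hy : y ∉ l) (hxy : x ≠ y) :
    ∃ P : List (α × α), (P.map (Function.uncurry swap)).prod = formPerm l * swap x y ∧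
      P.Nodup ∧ ∀ p ∈ P, (p.1 = x ∨ p.1 = y) ∧ p.2 ∈ l := by
  obtain ⟨d, r, a, rfl⟩ : ∃ d r a, l = d :: (r ++ [a]) := by
    match l, hlen with
    | d :: b :: t, _ =>
      obtain ⟨r, a, h⟩ := (b :: t).eq_nil_or_concat.resolve_left (cons_ne_nil _ _)
      exact ⟨d, r, a, by rw [h, concat_eq_append]⟩
  have had : a ≠ d := by rintro rfl; exact (nodup_cons.1 hl).1 (by simp)
  refine ⟨(a :: r.reverse).map (x, ·) ++ [(y, d), (x, d), (y, a)], ?_, ?_, ?_⟩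
  · have hxl : (x :: (r ++ [a])).Nodup :=
      nodup_cons.2 ⟨fun h => hx (mem_cons_of_mem _ h), hl.of_cons⟩
    have hxar : (x :: a :: r.reverse).Nodup := by
      simp only [nodup_cons, mem_cons, mem_reverse, nodup_reverse, nodup_append,
        mem_append] at hxl hl ⊢
      tauto
    calc _ = ((a :: r.reverse).map (swap x)).prod * (swap y d * swap x d * swap y a) := by
          simp [Function.comp_def, mul_assoc]
      _ = formPerm (x :: (r ++ [a])) * (swap y d * swap x d * swap y a) := by
          rw [prod_map_swap_eq_formPerm hxar, reverse_cons, reverse_reverse]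
      _ = formPerm (r ++ [a]) * (swap a x * swap y d * swap x d * swap y a) := by
          rw [formPerm_cons_append_singleton hxl]; simp only [mul_assoc]
      _ = formPerm (d :: (r ++ [a])) * swap x y := by
          rw [swap_mul_swap_mul_swap_mul_swap had hxy (by grind) (by grind) (by grind) (by grind),
            formPerm_cons_append_singleton hl, mul_assoc]
  · simp only [nodup_cons, nodup_append, mem_append, mem_cons, not_or] at hl
    simp [nodup_append, nodup_map_iff (Prod.mk_right_injective x), hl, hxy]
    grind
  · simp only [map_cons, mem_append, mem_cons, mem_map]
    grind

theorem exists_pairs_prod_formPerm_mul_swap_pow {x y : α} (hxy : x ≠ y) :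
    ∀ L : List (List α), L.flatten.Nodup → (∀ l ∈ L, 2 ≤ l.length) →
      x ∉ L.flatten → y ∉ L.flatten →
      ∃ P : List (α × α), (P.map (Function.uncurry swap)).prod =
          (L.map formPerm).prod * swap x y ^ L.length ∧
        P.Nodup ∧ ∀ p ∈ P, (p.1 = x ∨ p.1 = y) ∧ p.2 ∈ L.flatten
  | [], _, _, _, _ => ⟨[], by simp, nodup_nil, by simp⟩
  | l :: L, hL, hlen, hx, hy => by
    rw [flatten_cons, nodup_append] at hL
    rw [flatten_cons, mem_append, not_or] at hx hy
    obtain ⟨P, hP, hPnd, hPmem⟩ :=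
      exists_pairs_formPerm_mul_swap hL.1 (hlen l mem_cons_self) hx.1 hy.1 hxy
    obtain ⟨Q, hQ, hQnd, hQmem⟩ := exists_pairs_prod_formPerm_mul_swap_pow hxy L hL.2.1
      (fun l hl => hlen l (mem_cons_of_mem _ hl)) hx.2 hy.2
    have hcomm : Commute (swap x y) (L.map formPerm).prod :=
      Commute.list_prod_right _ _ fun f hf => by
        obtain ⟨l', hl', rfl⟩ := mem_map.1 hf
        exact commute_swap_of_apply_eq
          (formPerm_apply_of_notMem fun h => hx.2 (mem_flatten_of_mem hl' h))
          (formPerm_apply_of_notMem fun h => hy.2 (mem_flatten_of_mem hl' h))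
    refine ⟨P ++ Q, ?_, nodup_append.2 ⟨hPnd, hQnd, ?_⟩, ?_⟩
    · rw [map_append, prod_append, hP, hQ, map_cons, prod_cons, length_cons, pow_succ',
        mul_assoc, ← mul_assoc (swap x y), hcomm.eq, mul_assoc, mul_assoc]
    · rintro p hp _ hq rfl
      exact hL.2.2 _ (hPmem p hp).2 _ (hQmem p hq).2 rfl
    · intro p hp
      rcases mem_append.1 hp with hp | hp
      · exact ⟨(hPmem p hp).1, mem_append_left _ (hPmem p hp).2⟩
      · exact ⟨(hQmem p hp).1, mem_append_right _ (hQmem p hp).2⟩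

theorem exists_swaps_prod_eq_inv_prod_formPerm {x y : α} (hxy : x ≠ y) (L : List (List α))
    (hL : L.flatten.Nodup) (hlen : ∀ l ∈ L, 2 ≤ l.length) (hx : x ∉ L.flatten)
    (hy : y ∉ L.flatten) :
    ∃ ts : List (Perm α), ts.prod = (L.map formPerm).prod⁻¹ ∧ ts.Nodup ∧
      ∀ t ∈ ts, t = swap x y ∨ ∃ u v, (u = x ∨ u = y) ∧ v ∈ L.flatten ∧ t = swap u v := by
  set L' := (L.map reverse).reverse
  have hL' : L'.flatten = L.flatten.reverse := reverse_flatten.symm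
  have hinv : (L'.map formPerm).prod = (L.map formPerm).prod⁻¹ := by
    simp [L', prod_inv_reverse, Function.comp_def, formPerm_reverse]
  obtain ⟨P, hP, hPnd, hPmem⟩ := exists_pairs_prod_formPerm_mul_swap_pow hxy L'
    (by rw [hL', nodup_reverse]; exact hL)
    (fun l hl => by
      obtain ⟨l₀, hl₀, rfl⟩ := mem_map.1 (mem_reverse.1 hl)
      simpa using hlen l₀ hl₀)
    (by simpa [hL'] using hx) (by simpa [hL'] using hy)
  simp only [hL', mem_reverse] at hPmem
  have hnodup := nodup_swap_cons_map_uncurry_swap hPnd fun p hp =>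
    ⟨(hPmem p hp).1, fun h => hx (h ▸ (hPmem p hp).2), fun h => hy (h ▸ (hPmem p hp).2)⟩
  obtain ⟨ts, hts, htsnd, htssub⟩ :=
    exists_nodup_prod_eq_of_prod_eq_mul_pow (swap_mul_self x y) hnodup
      (hP.trans (by rw [hinv]))
  refine ⟨ts, hts, htsnd, fun t ht => (mem_cons.1 (htssub ht)).imp id fun ht => ?_⟩
  obtain ⟨p, hp, rfl⟩ := mem_map.1 ht
  exact ⟨p.1, p.2, (hPmem p hp).1, (hPmem p hp).2, rfl⟩

end

theorem stmt4 (n : ℕ) (L : List (List ℕ)) (hnd : ∀ l ∈ L, l.Nodup)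
    (hlen : ∀ l ∈ L, 2 ≤ l.length) (hmem : ∀ l ∈ L, ∀ a ∈ l, 1 ≤ a ∧ a ≤ n)
    (hdisj : L.Pairwise fun l l' => ∀ a ∈ l, a ∉ l')
    (σ : Equiv.Perm ℕ) (hσ : σ = (L.map List.formPerm).prod) :
    ∃ ts : List (Equiv.Perm ℕ),
      ts.prod = σ⁻¹ ∧ ts.Pairwise (· ≠ ·) ∧
      ∀ t ∈ ts, (∃ a b : ℕ, a ≠ b ∧ t = Equiv.swap a b) ∧
        (t (n+1) ≠ n+1 ∨ t (n+2) ≠ n+2) := by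
  have hL : L.flatten.Nodup := nodup_flatten.2 ⟨hnd, hdisj.imp fun h a ha ha' => h a ha ha'⟩
  have hle : ∀ a ∈ L.flatten, a ≤ n := fun a ha => by
    obtain ⟨l, hl, ha⟩ := mem_flatten.1 ha
    exact (hmem l hl a ha).2
  obtain ⟨ts, hts, htsnd, htsmem⟩ := exists_swaps_prod_eq_inv_prod_formPerm (x := n + 1)
    (y := n + 2) (by omega) L hL hlen (fun h => by have := hle _ h; omega)
    (fun h => by have := hle _ h; omega)
  refine ⟨ts, hσ ▸ hts, htsnd, fun t ht => ?_⟩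
  rcases htsmem t ht with rfl | ⟨u, v, hu, hv, rfl⟩
  · exact ⟨⟨n + 1, n + 2, by omega, rfl⟩, Or.inl (by simp)⟩
  · have := hle v hv
    refine ⟨⟨u, v, by omega, rfl⟩, ?_⟩
    rcases hu with rfl | rfl
    · exact Or.inl (by rw [swap_apply_left]; omega)
    · exact Or.inr (by rw [swap_apply_left]; omega)
end

section
/- Let m ≥ 4 be even, n ≥ m, and let (a₁ a₂) be a transposition in Sₙ. With three groups of m/2 − 1 new outsiders w₁,…,w_{m/2−1}, y₁,…,y_{m/2−1}, z₁,…,z_{m/2−1}, the inverse (a₁ a₂) equals the product of the three m-cycles (a₁ z_{m/2−1} ⋯ z₁ y_{m/2−1} ⋯ y₁ a₂) · (a₁ w_{m/2−1} ⋯ w₁ a₂ z₁ ⋯ z_{m/2−1}) · (w₁ ⋯ w_{m/2−1} a₁ y₁ ⋯ y_{m/2−1} a₂), and these three m-cycles permute pairwise distinct sets of m elements. -/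
/-!
Write `a`, `b` for `a₁`, `a₂`, let `W`, `Y`, `Z` be the lists of the `wᵢ`, `yᵢ`, `zᵢ`, write `P l`
for the cycle through a list `l` and `C₁`, `C₂`, `C₃` for the three `m`-cycles. Rotating each `Cᵢ` and splitting it at a
repeated point gives `C₁ = P(b :: Y)⁻¹ (b a) P(Z ++ [a])⁻¹`, `C₂ = P(Z ++ [a]) P(b :: W ++ [a])⁻¹`
and `C₃ = P(b :: W ++ [a]) P(a :: Y)`. The product telescopes to `P(b :: Y)⁻¹ (b a) P(a :: Y)`,
which is `(a b)` since conjugating `P(a :: Y)` by `(a b)` gives `P(b :: Y)`.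
The supports differ: any `yᵢ` lies in that of `C₁` but not of `C₂`, and any `zᵢ` in those of `C₁`
and `C₂` but not of `C₃`.
-/

open Equiv

namespace List

variable {α : Type*}

theorem map_range_sub_eq_reverse (f : ℕ → α) (k : ℕ) :
    (range k).map (fun i => f (k - i)) = ((range k).map fun i => f (i + 1)).reverse := by
  rw [← map_reverse, range_eq_range', reverse_range', map_map, ← range_eq_range']
  refine map_congr_left fun i hi => ?_
  rw [mem_range] at hi
  simp only [Function.comp_apply]
  congr 1
  omega

variable [DecidableEq α]

theorem formPerm_append_cons (l₁ l₂ : List α) (x : α) :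
    formPerm (l₁ ++ x :: l₂) = formPerm (l₁ ++ [x]) * formPerm (x :: l₂) := by
  induction l₁ with
  | nil => simp
  | cons y l₁ ih =>
    cases l₁ with
    | nil => simp
    | cons z l₁ => simpa [mul_assoc] using ih

theorem formPerm_map_perm (σ : Equiv.Perm α) (l : List α) :
    formPerm (l.map σ) = σ * formPerm l * σ⁻¹ := by
  induction l with
  | nil => simp
  | cons x l ih =>
    cases l with
    | nil => simp
    | cons y l =>
      rw [map_cons, map_cons, formPerm_cons_cons, ← map_cons, ih, formPerm_cons_cons,
        swap_apply_apply]
      group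

theorem formPerm_append_comm {l₁ l₂ : List α} (h : (l₁ ++ l₂).Nodup) :
    formPerm (l₁ ++ l₂) = formPerm (l₂ ++ l₁) :=
  formPerm_eq_of_isRotated h isRotated_append

theorem formPerm_cons_eq_swap_mul_formPerm_cons_mul_swap {a b : α} {l : List α} (ha : a ∉ l)
    (hb : b ∉ l) : formPerm (b :: l) = Equiv.swap a b * formPerm (a :: l) * Equiv.swap a b := by
  have hl : l.map (Equiv.swap a b) = l :=
    (map_congr_left fun x hx => swap_apply_of_ne_of_ne (ne_of_mem_of_not_mem hx ha)
      (ne_of_mem_of_not_mem hx hb)).trans (map_id l)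
  simpa [hl] using formPerm_map_perm (Equiv.swap a b) (a :: l)

end List

open List

variable {α : Type*} [DecidableEq α]

theorem swap_eq_formPerm_mul_formPerm_mul_formPerm (a b : α) (W Y Z : List α)
    (h : (a :: b :: (W ++ Y ++ Z)).Nodup) :
    Equiv.swap a b = formPerm (a :: (Z.reverse ++ Y.reverse ++ [b])) *
      formPerm (a :: (W.reverse ++ [b] ++ Z)) * formPerm (W ++ [a] ++ Y ++ [b]) := by
  have h₁ : formPerm (a :: (Z.reverse ++ Y.reverse ++ [b])) =
      (formPerm (b :: Y))⁻¹ * Equiv.swap b a * (formPerm (Z ++ [a]))⁻¹ := by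
    have hnd : (a :: Z.reverse ++ (Y.reverse ++ [b])).Nodup := by
      grind [nodup_cons, nodup_append, nodup_reverse]
    calc formPerm (a :: (Z.reverse ++ Y.reverse ++ [b]))
        = formPerm (Y.reverse ++ b :: a :: Z.reverse) := by
          simpa using formPerm_append_comm hnd
      _ = formPerm (Y.reverse ++ [b]) * Equiv.swap b a * formPerm (a :: Z.reverse) := by
          rw [formPerm_append_cons, formPerm_cons_cons, mul_assoc]
      _ = _ := by simp [← formPerm_reverse]
  have h₂ : formPerm (a :: (W.reverse ++ [b] ++ Z)) =
      formPerm (Z ++ [a]) * (formPerm (b :: (W ++ [a])))⁻¹ := by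
    have hnd : (a :: (W.reverse ++ [b]) ++ Z).Nodup := by
      grind [nodup_cons, nodup_append, nodup_reverse]
    calc formPerm (a :: (W.reverse ++ [b] ++ Z))
        = formPerm (Z ++ a :: (W.reverse ++ [b])) := by
          simpa using formPerm_append_comm hnd
      _ = formPerm (Z ++ [a]) * formPerm (a :: (W.reverse ++ [b])) := formPerm_append_cons ..
      _ = _ := by simp [← formPerm_reverse]
  have h₃ : formPerm (W ++ [a] ++ Y ++ [b]) = formPerm (b :: (W ++ [a])) * formPerm (a :: Y) := by
    have hnd : (W ++ a :: Y ++ [b]).Nodup := by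
      grind [nodup_cons, nodup_append, nodup_reverse]
    calc formPerm (W ++ [a] ++ Y ++ [b])
        = formPerm (b :: W ++ a :: Y) := by
          simpa using formPerm_append_comm hnd
      _ = _ := by rw [formPerm_append_cons]; rfl
  obtain ⟨haY, hbY⟩ : a ∉ Y ∧ b ∉ Y := by grind [nodup_cons, nodup_append]
  have h₄ : formPerm (b :: Y) = Equiv.swap a b * formPerm (a :: Y) * Equiv.swap a b :=
    formPerm_cons_eq_swap_mul_formPerm_cons_mul_swap haY hbY
  rw [h₁, h₂, h₃, h₄]
  simp [mul_assoc, swap_comm b a]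

theorem toFinset_ne_of_three_cycles (a b : α) (W Y Z : List α)
    (h : (a :: b :: (W ++ Y ++ Z)).Nodup) (hY : Y ≠ []) (hZ : Z ≠ []) :
    (a :: (Z.reverse ++ Y.reverse ++ [b])).toFinset ≠ (a :: (W.reverse ++ [b] ++ Z)).toFinset ∧
    (a :: (Z.reverse ++ Y.reverse ++ [b])).toFinset ≠ (W ++ [a] ++ Y ++ [b]).toFinset ∧
    (a :: (W.reverse ++ [b] ++ Z)).toFinset ≠ (W ++ [a] ++ Y ++ [b]).toFinset := by
  obtain ⟨y, hy⟩ := exists_mem_of_ne_nil Y hY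
  obtain ⟨z, hz⟩ := exists_mem_of_ne_nil Z hZ
  refine ⟨ne_of_mem_of_not_mem' (a := y) ?_ ?_, ne_of_mem_of_not_mem' (a := z) ?_ ?_,
    ne_of_mem_of_not_mem' (a := z) ?_ ?_⟩ <;>
  simp only [mem_toFinset, mem_cons, mem_append, mem_reverse] <;>
  grind [nodup_cons, nodup_append]

theorem stmt10_general (m : ℕ) (hm : 4 ≤ m) (a₁ a₂ : ℕ) (w y z : ℕ → ℕ)
    (hnd : (a₁ :: a₂ ::
        ((List.range (m / 2 - 1)).map (fun i => w (i + 1)) ++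
         (List.range (m / 2 - 1)).map (fun i => y (i + 1)) ++
         (List.range (m / 2 - 1)).map (fun i => z (i + 1)))).Nodup) :
    (Equiv.swap a₁ a₂)⁻¹ =
      (a₁ :: ((List.range (m / 2 - 1)).map (fun i => z (m / 2 - 1 - i)) ++
          (List.range (m / 2 - 1)).map (fun i => y (m / 2 - 1 - i)) ++ [a₂])).formPerm *
      (a₁ :: ((List.range (m / 2 - 1)).map (fun i => w (m / 2 - 1 - i)) ++ [a₂] ++
          (List.range (m / 2 - 1)).map (fun i => z (i + 1)))).formPerm *
      ((List.range (m / 2 - 1)).map (fun i => w (i + 1)) ++ [a₁] ++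
          (List.range (m / 2 - 1)).map (fun i => y (i + 1)) ++ [a₂]).formPerm ∧
    (a₁ :: ((List.range (m / 2 - 1)).map (fun i => z (m / 2 - 1 - i)) ++
        (List.range (m / 2 - 1)).map (fun i => y (m / 2 - 1 - i)) ++ [a₂])).toFinset ≠
      (a₁ :: ((List.range (m / 2 - 1)).map (fun i => w (m / 2 - 1 - i)) ++ [a₂] ++
        (List.range (m / 2 - 1)).map (fun i => z (i + 1)))).toFinset ∧
    (a₁ :: ((List.range (m / 2 - 1)).map (fun i => z (m / 2 - 1 - i)) ++
        (List.range (m / 2 - 1)).map (fun i => y (m / 2 - 1 - i)) ++ [a₂])).toFinset ≠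
      ((List.range (m / 2 - 1)).map (fun i => w (i + 1)) ++ [a₁] ++
        (List.range (m / 2 - 1)).map (fun i => y (i + 1)) ++ [a₂]).toFinset ∧
    (a₁ :: ((List.range (m / 2 - 1)).map (fun i => w (m / 2 - 1 - i)) ++ [a₂] ++
        (List.range (m / 2 - 1)).map (fun i => z (i + 1)))).toFinset ≠
      ((List.range (m / 2 - 1)).map (fun i => w (i + 1)) ++ [a₁] ++
        (List.range (m / 2 - 1)).map (fun i => y (i + 1)) ++ [a₂]).toFinset := by
  have hne : ∀ f : ℕ → ℕ, (List.range (m / 2 - 1)).map (fun i => f (i + 1)) ≠ [] := by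
    intro f
    simp only [ne_eq, map_eq_nil_iff, range_eq_nil]
    omega
  rw [map_range_sub_eq_reverse w, map_range_sub_eq_reverse y, map_range_sub_eq_reverse z,
    swap_inv]
  exact ⟨swap_eq_formPerm_mul_formPerm_mul_formPerm _ _ _ _ _ hnd,
    toFinset_ne_of_three_cycles _ _ _ _ _ hnd (hne y) (hne z)⟩

theorem stmt10 (m n : ℕ) (hm : 4 ≤ m) (heven : Even m) (hmn : m ≤ n)
    (a₁ a₂ : ℕ) (ha₁ : 1 ≤ a₁) (ha₁n : a₁ ≤ n) (ha₂ : 1 ≤ a₂) (ha₂n : a₂ ≤ n)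
    (w y z : ℕ → ℕ)
    (hout : ∀ i, 1 ≤ i → i ≤ m / 2 - 1 → n < w i ∧ n < y i ∧ n < z i)
    (hnd : (a₁ :: a₂ ::
        ((List.range (m / 2 - 1)).map (fun i => w (i + 1)) ++
         (List.range (m / 2 - 1)).map (fun i => y (i + 1)) ++
         (List.range (m / 2 - 1)).map (fun i => z (i + 1)))).Nodup) :
    (Equiv.swap a₁ a₂)⁻¹ =
      (a₁ :: ((List.range (m / 2 - 1)).map (fun i => z (m / 2 - 1 - i)) ++
          (List.range (m / 2 - 1)).map (fun i => y (m / 2 - 1 - i)) ++ [a₂])).formPerm *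
      (a₁ :: ((List.range (m / 2 - 1)).map (fun i => w (m / 2 - 1 - i)) ++ [a₂] ++
          (List.range (m / 2 - 1)).map (fun i => z (i + 1)))).formPerm *
      ((List.range (m / 2 - 1)).map (fun i => w (i + 1)) ++ [a₁] ++
          (List.range (m / 2 - 1)).map (fun i => y (i + 1)) ++ [a₂]).formPerm ∧
    (a₁ :: ((List.range (m / 2 - 1)).map (fun i => z (m / 2 - 1 - i)) ++
        (List.range (m / 2 - 1)).map (fun i => y (m / 2 - 1 - i)) ++ [a₂])).toFinset ≠
      (a₁ :: ((List.range (m / 2 - 1)).map (fun i => w (m / 2 - 1 - i)) ++ [a₂] ++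
        (List.range (m / 2 - 1)).map (fun i => z (i + 1)))).toFinset ∧
    (a₁ :: ((List.range (m / 2 - 1)).map (fun i => z (m / 2 - 1 - i)) ++
        (List.range (m / 2 - 1)).map (fun i => y (m / 2 - 1 - i)) ++ [a₂])).toFinset ≠
      ((List.range (m / 2 - 1)).map (fun i => w (i + 1)) ++ [a₁] ++
        (List.range (m / 2 - 1)).map (fun i => y (i + 1)) ++ [a₂]).toFinset ∧
    (a₁ :: ((List.range (m / 2 - 1)).map (fun i => w (m / 2 - 1 - i)) ++ [a₂] ++
        (List.range (m / 2 - 1)).map (fun i => z (i + 1)))).toFinset ≠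
      ((List.range (m / 2 - 1)).map (fun i => w (i + 1)) ++ [a₁] ++
        (List.range (m / 2 - 1)).map (fun i => y (i + 1)) ++ [a₂]).toFinset :=
  stmt10_general m hm a₁ a₂ w y z hnd
end

section
/- Let m ≥ 3 be odd, n ≥ m, and σ ∈ Aₙ. Then with m−2 outsiders added, σ⁻¹ can be written as a product of m-cycles in S_{n+(m−2)}, each of which moves at least one outsider, such that all the m-cycles in the product have pairwise distinct supports (as sets of m elements). -/
/-! Peel an even permutation `τ` fixing the outsiders `l` one 3-cycle at a time. If `τ a = b` and
`x` is a third point moved by `τ`, then `(a b x) = (a x l)⁻¹ (a b l)` is a product of two cycles of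
length `|l| + 2` through all outsiders, and `(a b x)⁻¹ τ` fixes `a` and moves only points moved by
`τ`. By induction on the support, the cycles produced for `(a b x)⁻¹ τ` all avoid `a`, whereas the
two new ones contain `a` and differ at `b`; so all supports are distinct. -/

open Equiv Finset

theorem List.formPerm_map_perm_s11 {α : Type*} [DecidableEq α] (f : Equiv.Perm α) :
    ∀ l : List α, formPerm (l.map f) = f * formPerm l * f⁻¹
  | [] => by simp
  | [_] => by simp
  | x :: y :: l => by
    rw [map_cons, map_cons, formPerm_cons_cons, ← map_cons, formPerm_map_perm_s11 f (y :: l),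
      formPerm_cons_cons, Equiv.swap_apply_apply]
    group

section ThreeCycle

variable {α : Type*} [DecidableEq α] {a b x : α} {l : List α}

theorem List.formPerm_cons_eq_swap_mul_formPerm_mul_swap (hb : b ∉ l) (hx : x ∉ l) :
    formPerm (x :: l) = Equiv.swap b x * formPerm (b :: l) * Equiv.swap b x := by
  have hl : l.map (Equiv.swap b x) = l := by
    refine map_congr_left (fun z hz => Equiv.swap_apply_of_ne_of_ne ?_ ?_) |>.trans (map_id l)
    exacts [ne_of_mem_of_not_mem hz hb, ne_of_mem_of_not_mem hz hx]
  simpa [hl] using formPerm_map_perm_s11 (Equiv.swap b x) (b :: l)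

theorem List.formPerm_mul_formPerm_three (h : (a :: b :: x :: l).Nodup) :
    formPerm (a :: x :: l) * formPerm [a, b, x] = formPerm (a :: b :: l) := by
  simp only [nodup_cons, mem_cons, not_or] at h
  obtain ⟨⟨hab, hax, hal⟩, ⟨hbx, hbl⟩, hxl, -⟩ := h
  have hcomm : Commute (Equiv.swap x a) (formPerm (b :: l)) := by
    refine Equiv.Perm.Disjoint.commute fun z => ?_
    by_cases hz : z = x ∨ z = a
    · exact .inr (formPerm_apply_of_notMem (by rcases hz with rfl | rfl <;> simp [*, Ne.symm]))
    · rw [not_or] at hz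
      exact .inl (Equiv.swap_apply_of_ne_of_ne hz.1 hz.2)
  calc formPerm (a :: x :: l) * formPerm [a, b, x]
      = Equiv.swap a x * Equiv.swap b x * formPerm (b :: l) *
          (Equiv.swap b x * Equiv.swap a b * Equiv.swap b x) := by
        rw [formPerm_cons_cons, formPerm_cons_eq_swap_mul_formPerm_mul_swap hbl hxl,
          formPerm_cons_cons, formPerm_pair]
        group
    _ = Equiv.swap x a * Equiv.swap b x * Equiv.swap x a * formPerm (b :: l) := by
        rw [Equiv.swap_mul_swap_mul_swap hab hax, mul_assoc _ _ (Equiv.swap x a), ← hcomm.eq,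
          Equiv.swap_comm a x]
        group
    _ = formPerm (a :: b :: l) := by
        rw [Equiv.swap_mul_swap_mul_swap hbx (Ne.symm hab), formPerm_cons_cons]

end ThreeCycle

namespace Equiv.Perm

variable {α : Type*} [DecidableEq α] [Fintype α]

theorem two_lt_card_support_of_sign_eq_one {τ : Perm α} (hτ : sign τ = 1) (hτ1 : τ ≠ 1) :
    2 < #τ.support := by
  have h2 : #τ.support ≠ 2 := fun h => by
    rw [(card_support_eq_two.mp h).sign_eq] at hτ
    exact absurd hτ (by decide)
  have := two_le_card_support_of_ne_one hτ1
  omega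

theorem exists_mem_support_ne_ne_of_sign_eq_one {τ : Perm α} (hτ : sign τ = 1) (hτ1 : τ ≠ 1) :
    ∃ a ∈ τ.support, ∃ x ∈ τ.support, x ≠ a ∧ x ≠ τ a := by
  have h := two_lt_card_support_of_sign_eq_one hτ hτ1
  obtain ⟨a, ha⟩ := card_pos.mp (by omega : 0 < #τ.support)
  obtain ⟨x, hx, hxb⟩ := exists_mem_ne (s := τ.support.erase a)
    (by rw [card_erase_of_mem ha]; omega) (τ a)
  exact ⟨a, ha, x, mem_of_mem_erase hx, ne_of_mem_erase hx, hxb⟩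

theorem sign_formPerm_three {a b x : α} (hab : a ≠ b) (hbx : b ≠ x) :
    sign (List.formPerm [a, b, x]) = 1 := by
  rw [List.formPerm_cons_cons, List.formPerm_pair, map_mul, sign_swap hab, sign_swap hbx]
  decide

def IsCycleThrough (l : List α) (s : Finset α) (c : Perm α) : Prop :=
  c.IsCycle ∧ #c.support = l.length + 2 ∧ l.toFinset ⊆ c.support ∧ c.support ⊆ s ∪ l.toFinset

theorem IsCycleThrough.mono {l : List α} {s t : Finset α} {c : Perm α}
    (hc : IsCycleThrough l s c) (hst : s ⊆ t) : IsCycleThrough l t c :=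
  ⟨hc.1, hc.2.1, hc.2.2.1, hc.2.2.2.trans (union_subset_union hst le_rfl)⟩

theorem IsCycleThrough.inv {l : List α} {s : Finset α} {c : Perm α}
    (hc : IsCycleThrough l s c) : IsCycleThrough l s c⁻¹ := by
  simpa only [IsCycleThrough, support_inv] using And.imp_left IsCycle.inv hc

theorem isCycleThrough_formPerm {l : List α} {s : Finset α} {a y : α}
    (h : (a :: y :: l).Nodup) (ha : a ∈ s) (hy : y ∈ s) :
    IsCycleThrough l s (List.formPerm (a :: y :: l)) := by
  rw [IsCycleThrough, List.support_formPerm_of_nodup _ h (by simp),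
    List.toFinset_card_of_nodup h]
  refine ⟨List.isCycle_formPerm h (by simp), rfl, fun z hz => by simp_all, fun z hz => ?_⟩
  simp only [List.mem_toFinset, List.mem_cons, mem_union] at hz ⊢
  rcases hz with rfl | rfl | hz <;> simp_all

theorem support_formPerm_three_inv_mul_subset {τ : Perm α} {a x : α} (ha : a ∈ τ.support)
    (hx : x ∈ τ.support) : ((List.formPerm [a, τ a, x])⁻¹ * τ).support ⊆ τ.support := by
  refine (support_mul_le _ _).trans (sup_le ?_ le_rfl)
  rw [support_inv]
  refine (List.support_formPerm_le _).trans fun z hz => ?_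
  simp only [List.mem_toFinset, List.mem_cons, List.not_mem_nil, or_false] at hz
  rcases hz with rfl | rfl | rfl
  exacts [ha, apply_mem_support.mpr ha, hx]

theorem pairwise_support_ne_cons_formPerm {l : List α} {a b x : α}
    (hnd : (a :: b :: x :: l).Nodup) {cs : List (Perm α)} (hcs : ∀ d ∈ cs, a ∉ d.support)
    (hpw : cs.Pairwise (fun c d => c.support ≠ d.support)) :
    ((List.formPerm (a :: x :: l))⁻¹ :: List.formPerm (a :: b :: l) :: cs).Pairwise
      (fun c d => c.support ≠ d.support) := by
  have hG : (List.formPerm (a :: x :: l))⁻¹.support = (a :: x :: l).toFinset := by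
    rw [support_inv, List.support_formPerm_of_nodup _ (hnd.sublist (by simp)) (by simp)]
  have hA : (List.formPerm (a :: b :: l)).support = (a :: b :: l).toFinset :=
    List.support_formPerm_of_nodup _ (hnd.sublist (by simp)) (by simp)
  have hGA : (a :: x :: l).toFinset ≠ (a :: b :: l).toFinset := fun h => by
    have hb : b ∈ a :: x :: l := List.mem_toFinset.mp (h ▸ by simp)
    simp only [List.nodup_cons, List.mem_cons, not_or] at hnd hb
    rcases hb with hb | hb | hb
    exacts [hnd.1.1 hb.symm, hnd.2.1.1 hb, hnd.2.1.2 hb]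
  refine .cons ?_ (.cons ?_ hpw)
  · simp only [List.mem_cons, forall_eq_or_imp, hG, hA]
    exact ⟨hGA, fun d hd h => hcs d hd (h ▸ by simp)⟩
  · exact fun d hd h => hcs d hd (h ▸ hA ▸ by simp)

theorem exists_prod_eq_isCycleThrough_of_sign_eq_one {l : List α} (hl : l.Nodup) {τ : Perm α}
    (hτ : sign τ = 1) (hfix : ∀ y ∈ l, τ y = y) :
    ∃ cs : List (Perm α), cs.prod = τ ∧ (∀ c ∈ cs, IsCycleThrough l τ.support c) ∧
      cs.Pairwise (fun c d => c.support ≠ d.support) := by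
  induction hk : #τ.support using Nat.strong_induction_on generalizing τ with
  | _ k ih =>
  obtain rfl | hτ1 := eq_or_ne τ 1
  · exact ⟨[], by simp, by simp, by simp⟩
  obtain ⟨a, ha, x, hx, hxa, hxb⟩ := exists_mem_support_ne_ne_of_sign_eq_one hτ hτ1
  have hb : τ a ∈ τ.support := apply_mem_support.mpr ha
  have hout : ∀ z ∈ τ.support, z ∉ l := fun z hz hzl => mem_support.mp hz (hfix z hzl)
  have hnd : (a :: τ a :: x :: l).Nodup := by
    simp only [List.nodup_cons, List.mem_cons, not_or]
    exact ⟨⟨(mem_support.mp ha).symm, hxa.symm, hout a ha⟩, ⟨hxb.symm, hout _ hb⟩, hout x hx, hl⟩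
  set c := List.formPerm [a, τ a, x]
  set τ' := c⁻¹ * τ
  have hτ'a : τ' a = a := by
    change c⁻¹ (τ a) = a
    rw [inv_eq_iff_eq]
    exact (List.formPerm_apply_head _ _ _ (hnd.sublist (by simp))).symm
  have hτ' : sign τ' = 1 := by
    rw [map_mul, sign_inv, sign_formPerm_three (mem_support.mp ha).symm hxb.symm, hτ, mul_one]
  have hsub : τ'.support ⊆ τ.support := support_formPerm_three_inv_mul_subset ha hx
  have hlt : #τ'.support < k :=
    hk ▸ card_lt_card ((ssubset_iff_of_subset hsub).mpr ⟨a, ha, notMem_support.mpr hτ'a⟩)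
  have hfix' : ∀ y ∈ l, τ' y = y := fun y hy => notMem_support.mp fun h => hout y (hsub h) hy
  obtain ⟨cs, hprod, hcs, hpw⟩ := ih _ hlt hτ' hfix' rfl
  have ha' : ∀ d ∈ cs, a ∉ d.support := fun d hd had => by
    simpa [hτ'a, hout a ha] using (hcs d hd).2.2.2 had
  refine ⟨(List.formPerm (a :: x :: l))⁻¹ :: List.formPerm (a :: τ a :: l) :: cs, ?_, ?_, ?_⟩
  · rw [List.prod_cons, List.prod_cons, hprod, ← List.formPerm_mul_formPerm_three hnd, mul_assoc,
      inv_mul_cancel_left]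
    exact mul_inv_cancel_left c τ
  · simp only [List.mem_cons, forall_eq_or_imp]
    exact ⟨(isCycleThrough_formPerm (hnd.sublist (by simp)) ha hx).inv,
      isCycleThrough_formPerm (hnd.sublist (by simp)) ha hb, fun d hd => (hcs d hd).mono hsub⟩
  · exact pairwise_support_ne_cons_formPerm hnd ha' hpw

end Equiv.Perm

theorem stmt11_general (m n : ℕ) (hm : 3 ≤ m)
    (σ : Equiv.Perm (Fin (n + (m - 2))))
    (hfix : ∀ i : Fin (n + (m - 2)), n ≤ i.val → σ i = i)
    (hsign : Equiv.Perm.sign σ = 1) :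
    ∃ cs : List (Equiv.Perm (Fin (n + (m - 2)))),
      σ⁻¹ = cs.prod ∧
      (∀ c ∈ cs, c.IsCycle ∧ c.support.card = m ∧
        ∃ i : Fin (n + (m - 2)), n ≤ i.val ∧ c i ≠ i) ∧
      cs.Pairwise (fun c d => c.support ≠ d.support) := by
  set outsiders := List.ofFn (Fin.natAdd n : Fin (m - 2) → Fin (n + (m - 2)))
  have hout : ∀ i ∈ outsiders, n ≤ i.val := by simp [outsiders]
  obtain ⟨cs, hprod, hcs, hpw⟩ := Equiv.Perm.exists_prod_eq_isCycleThrough_of_sign_eq_one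
    (List.nodup_ofFn.mpr (Fin.natAdd_injective _ n)) (τ := σ⁻¹) (by simp [hsign])
    (fun i hi => by rw [Equiv.Perm.inv_eq_iff_eq, hfix i (hout i hi)])
  refine ⟨cs, hprod.symm, fun c hc => ?_, hpw⟩
  obtain ⟨hcyc, hcard, hsub, -⟩ := hcs c hc
  have h0 : Fin.natAdd n ⟨0, by omega⟩ ∈ outsiders := List.mem_ofFn.mpr ⟨_, rfl⟩
  refine ⟨hcyc, by simp only [hcard, List.length_ofFn]; omega, _, hout _ h0, ?_⟩
  exact Equiv.Perm.mem_support.mp (hsub (List.mem_toFinset.mpr h0))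

theorem stmt11 (m n : ℕ) (hm : 3 ≤ m) (hodd : Odd m) (hmn : m ≤ n)
    (σ : Equiv.Perm (Fin (n + (m - 2))))
    (hfix : ∀ i : Fin (n + (m - 2)), n ≤ i.val → σ i = i)
    (hsign : Equiv.Perm.sign σ = 1) :
    ∃ cs : List (Equiv.Perm (Fin (n + (m - 2)))),
      σ⁻¹ = cs.prod ∧
      (∀ c ∈ cs, c.IsCycle ∧ c.support.card = m ∧
        ∃ i : Fin (n + (m - 2)), n ≤ i.val ∧ c i ≠ i) ∧
      cs.Pairwise (fun c d => c.support ≠ d.support) :=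
  stmt11_general m n hm σ hfix hsign
end
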